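/- arXiv:2105.01310 — 3 statements merged into one kernel-verified Lean document; each statement's English description precedes it below -/
import Mathlib

section
/- The process M(n) = min{M_1(n), M_2(n), …, M_{m−2}(n)}, where M_i(n) = A_i(n)·A_{i+1}(n) + n/m, is a supermartingale with respect to the filtration (F_n), i.e. E[M(n+1) | F_n] ≤ M(n) for every n ≥ 0. -/
open MeasureTheory ProbabilityTheory Filter
open scoped ENNReal

/-- The `m` possible step vectors of the competition process on the `m - 1` gaps
(0-indexed): `step m 0 = -e₀`, `step m k = e_{k-1} - e_k` for `0 < k < m - 1`, and
`step m (m-1) = e_{m-2}`. -/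
def step (m : ℕ) (k : Fin m) : Fin (m - 1) → ℤ := fun j =>
  (if (j : ℕ) + 1 = (k : ℕ) then 1 else 0) - (if (j : ℕ) = (k : ℕ) then 1 else 0)

/-! Every coordinate of a uniform step has mean zero, and the product of coordinates `i` and
`i + 1` is `-1` for the single step `e_i - e_{i+1}` and `0` otherwise, so it has mean `-1/m`.
Expanding `(A_i + ξ_i)(A_{i+1} + ξ_{i+1})` and using that the step is independent of the past
shows that each `A_i(n) A_{i+1}(n) + n/m` is a martingale; a minimum of finitely many
martingales is a supermartingale because conditional expectation is monotone. -/

lemma step_injective (m : ℕ) : Function.Injective (step m) := by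
  intro k k' h
  by_contra hne
  have hne' : (k : ℕ) ≠ k' := Fin.val_ne_of_ne hne
  -- `step m k` has a `-1` exactly at coordinate `k`, which exists unless `k = m - 1`
  wlog hk : (k : ℕ) < m - 1 generalizing k k'
  · exact this h.symm (Ne.symm hne) hne'.symm (by omega)
  have := congrFun h ⟨k, hk⟩
  simp only [step] at this
  split_ifs at this <;> omega

private lemma sum_ite_val_eq_one {m c : ℕ} (hc : c < m) :
    ∑ k : Fin m, (if c = (k : ℕ) then (1 : ℤ) else 0) = 1 := by
  rw [Fin.sum_univ_eq_sum_range (fun v => if c = v then (1 : ℤ) else 0), Finset.sum_ite_eq]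
  simp [hc]

lemma sum_step_apply (m : ℕ) (j : Fin (m - 1)) : ∑ k : Fin m, step m k j = 0 := by
  simp only [step, Finset.sum_sub_distrib]
  rw [sum_ite_val_eq_one (by omega), sum_ite_val_eq_one (by omega), sub_self]

lemma sum_step_apply_mul_step_apply_of_succ (m : ℕ) {i j : Fin (m - 1)}
    (hij : (j : ℕ) = i + 1) : ∑ k : Fin m, step m k i * step m k j = -1 := by
  have hprod : ∀ k : Fin m, step m k i * step m k j = -(if (i : ℕ) + 1 = k then 1 else 0) := by
    intro k; simp only [step, hij]; split_ifs <;> omega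
  rw [Finset.sum_congr rfl fun k _ => hprod k, Finset.sum_neg_distrib,
    sum_ite_val_eq_one (by omega)]

section FiniteLaw

variable {Ω α ι E : Type*} [MeasurableSpace Ω] [MeasurableSpace α] [MeasurableSingletonClass α]
  [Fintype ι] [NormedAddCommGroup E] {μ : Measure Ω} [IsProbabilityMeasure μ] {X : Ω → α}
  {v : ι → α}

lemma ae_mem_range_of_sum_measure_eq_one (hX : Measurable X) (hv : Function.Injective v)
    (hsum : ∑ k, μ {ω | X ω = v k} = 1) : ∀ᵐ ω ∂μ, X ω ∈ Set.range v := by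
  have hdisj : Pairwise (Function.onFun Disjoint fun k => {ω | X ω = v k}) :=
    fun k k' hkk' => Set.disjoint_left.mpr fun ω h h' => hkk' (hv (h.symm.trans h'))
  have hunion : {ω | X ω ∈ Set.range v} = ⋃ k, {ω | X ω = v k} := by
    ext ω; simp [eq_comm]
  have hmeas : MeasurableSet {ω | X ω ∈ Set.range v} :=
    hX (Set.finite_range v).measurableSet
  rw [ae_iff_measure_eq hmeas.nullMeasurableSet, hunion,
    measure_iUnion hdisj fun k => hX (measurableSet_singleton _), tsum_fintype, hsum, measure_univ]

lemma comp_ae_eq_sum_indicator (hX : Measurable X) (hv : Function.Injective v)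
    (hsum : ∑ k, μ {ω | X ω = v k} = 1) (f : α → E) :
    (fun ω => f (X ω)) =ᵐ[μ] fun ω => ∑ k, {ω | X ω = v k}.indicator (fun _ => f (v k)) ω := by
  filter_upwards [ae_mem_range_of_sum_measure_eq_one hX hv hsum] with ω ⟨k₀, hk₀⟩
  rw [Finset.sum_eq_single k₀]
  · simp [hk₀]
  · intro k _ hk
    exact Set.indicator_of_notMem (fun h => hk (hv (h.symm.trans hk₀.symm))) _
  · simp

lemma memLp_comp_of_sum_measure_eq_one (hX : Measurable X) (hv : Function.Injective v)
    (hsum : ∑ k, μ {ω | X ω = v k} = 1) (f : α → E) (p : ℝ≥0∞) :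
    MemLp (fun ω => f (X ω)) p μ := by
  refine MemLp.ae_eq (comp_ae_eq_sum_indicator hX hv hsum f).symm (memLp_finsetSum _ fun k _ => ?_)
  exact memLp_indicator_const p (hX (measurableSet_singleton _)) _ (Or.inr (measure_ne_top _ _))

lemma integral_comp_of_sum_measure_eq_one [NormedSpace ℝ E] [CompleteSpace E] (hX : Measurable X)
    (hv : Function.Injective v) (hsum : ∑ k, μ {ω | X ω = v k} = 1) (f : α → E) :
    ∫ ω, f (X ω) ∂μ = ∑ k, μ.real {ω | X ω = v k} • f (v k) := by
  rw [integral_congr_ae (comp_ae_eq_sum_indicator hX hv hsum f), integral_finsetSum]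
  · exact Finset.sum_congr rfl fun k _ =>
      integral_indicator_const _ (hX (measurableSet_singleton _))
  · exact fun k _ => (integrable_const _).indicator (hX (measurableSet_singleton _))

end FiniteLaw

lemma condExp_add_mul_add_of_indep {Ω : Type*} {m m' mΩ : MeasurableSpace Ω} {μ : Measure Ω}
    [IsProbabilityMeasure μ] (hm : m ≤ mΩ) (hm' : m' ≤ mΩ) (hind : Indep m m' μ)
    {B B' X X' : Ω → ℝ} (hB : StronglyMeasurable[m] B) (hB' : StronglyMeasurable[m] B')
    (hX : StronglyMeasurable[m'] X) (hX' : StronglyMeasurable[m'] X') (hB₂ : MemLp B 2 μ)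
    (hB₂' : MemLp B' 2 μ) (hX₂ : MemLp X 2 μ) (hX₂' : MemLp X' 2 μ) :
    μ[(B + X) * (B' + X')|m] =ᵐ[μ]
      fun ω => B ω * B' ω + B ω * μ[X'] + B' ω * μ[X] + μ[X * X'] := by
  have hBX' : Integrable (B * X') μ := hB₂.integrable_mul hX₂'
  have hB'X : Integrable (B' * X) μ := hB₂'.integrable_mul hX₂
  have hXX' : Integrable (X * X') μ := hX₂.integrable_mul hX₂'
  have hmean : ∀ {Y : Ω → ℝ}, StronglyMeasurable[m'] Y → μ[Y|m] =ᵐ[μ] fun _ => μ[Y] :=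
    fun hY => condExp_indep_eq hm' hm hY hind.symm
  have hBB' : μ[B * B'|m] = B * B' :=
    condExp_of_stronglyMeasurable hm (hB.mul hB') (hB₂.integrable_mul hB₂')
  have hBX'_eq := condExp_mul_of_stronglyMeasurable_left hB hBX' (hX₂'.integrable one_le_two)
  have hB'X_eq := condExp_mul_of_stronglyMeasurable_left hB' hB'X (hX₂.integrable one_le_two)
  have hexpand : (B + X) * (B' + X') = B * B' + (B * X' + (B' * X + X * X')) := by ring
  rw [hexpand]
  filter_upwards [condExp_add (hB₂.integrable_mul hB₂') (hBX'.add (hB'X.add hXX')) m,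
    condExp_add hBX' (hB'X.add hXX') m, condExp_add hB'X hXX' m, hBX'_eq, hB'X_eq,
    hmean hX, hmean hX', hmean (hX.mul hX')] with ω h₁ h₂ h₃ h₄ h₅ h₆ h₇ h₈
  simp only [Pi.add_apply, Pi.mul_apply] at h₁ h₂ h₃ h₄ h₅ ⊢
  rw [h₁, hBB', h₂, h₃, h₄, h₅, h₆, h₇, h₈]
  simp only [Pi.mul_apply]
  ring

lemma condExp_finset_inf'_le {Ω ι : Type*} {m mΩ : MeasurableSpace Ω} {μ : Measure Ω}
    {s : Finset ι} (hs : s.Nonempty) {f : ι → Ω → ℝ} (hf : ∀ i ∈ s, Integrable (f i) μ) :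
    μ[s.inf' hs f|m] ≤ᵐ[μ] s.inf' hs fun i => μ[f i|m] := by
  have hint : Integrable (s.inf' hs f) μ :=
    Finset.inf'_induction hs f (p := (Integrable · μ)) (fun _ h₁ _ h₂ => h₁.inf h₂) hf
  have hle : ∀ i ∈ s, μ[s.inf' hs f|m] ≤ᵐ[μ] μ[f i|m] := fun i hi =>
    condExp_mono hint (hf i hi) (ae_of_all _ fun ω => by
      rw [Finset.inf'_apply]; exact Finset.inf'_le _ hi)
  filter_upwards [(eventually_all_finset s).mpr hle] with ω hω
  rw [Finset.inf'_apply]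
  exact Finset.le_inf' _ _ hω

section Walk

variable {Ω β : Type*} [MeasurableSpace β] {ξ : ℕ → Ω → β} {ℱ : ℕ → MeasurableSpace Ω}

lemma filtration_le {mΩ : MeasurableSpace Ω} (hmeas : ∀ n, Measurable (ξ n))
    (hℱ : ∀ n, ℱ n = ⨆ k ∈ Finset.range n, MeasurableSpace.comap (ξ k) inferInstance) (n : ℕ) :
    ℱ n ≤ mΩ := by
  rw [hℱ]
  exact iSup₂_le fun k _ => (hmeas k).comap_le

lemma measurable_increment_of_lt
    (hℱ : ∀ n, ℱ n = ⨆ k ∈ Finset.range n, MeasurableSpace.comap (ξ k) inferInstance)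
    {k n : ℕ} (hkn : k < n) : Measurable[ℱ n] (ξ k) := by
  rw [measurable_iff_comap_le, hℱ]
  exact le_iSup₂ (f := fun k (_ : k ∈ Finset.range n) => MeasurableSpace.comap (ξ k) inferInstance)
    k (Finset.mem_range.mpr hkn)

lemma indep_filtration_increment {mΩ : MeasurableSpace Ω} {μ : Measure Ω}
    (hmeas : ∀ n, Measurable (ξ n)) (hindep : iIndepFun ξ μ)
    (hℱ : ∀ n, ℱ n = ⨆ k ∈ Finset.range n, MeasurableSpace.comap (ξ k) inferInstance) (n : ℕ) :
    Indep (ℱ n) (MeasurableSpace.comap (ξ n) inferInstance) μ := by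
  rw [hℱ]
  simpa using indep_iSup_of_disjoint (fun k => (hmeas k).comap_le) hindep
    (S := (Finset.range n : Set ℕ)) (T := {n}) (by simp)

lemma measurable_walk_of_le [Add β] [MeasurableAdd₂ β] {A : ℕ → Ω → β} {c : β}
    (hA0 : ∀ ω, A 0 ω = c) (hA : ∀ n ω, A (n + 1) ω = A n ω + ξ n ω)
    (hℱ : ∀ n, ℱ n = ⨆ k ∈ Finset.range n, MeasurableSpace.comap (ξ k) inferInstance)
    {t n : ℕ} (htn : t ≤ n) : Measurable[ℱ n] (A t) := by
  induction t with
  | zero => simp [funext hA0]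
  | succ t ih =>
    rw [funext (hA t)]
    exact (ih (by omega)).add (measurable_increment_of_lt hℱ (by omega))

lemma memLp_walk_apply {mΩ : MeasurableSpace Ω} {μ : Measure Ω} [IsFiniteMeasure μ] {ι : Type*}
    {A ξ : ℕ → Ω → ι → ℤ} {c : ι → ℤ}
    (hA0 : ∀ ω, A 0 ω = c) (hA : ∀ n ω, A (n + 1) ω = A n ω + ξ n ω) {p : ℝ≥0∞}
    (hξ : ∀ t j, MemLp (fun ω => (ξ t ω j : ℝ)) p μ) (t : ℕ) (j : ι) :
    MemLp (fun ω => (A t ω j : ℝ)) p μ := by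
  induction t with
  | zero => simpa [hA0] using memLp_const (c j : ℝ)
  | succ t ih =>
    refine (ih.add (hξ t j)).ae_eq (ae_of_all _ fun ω => ?_)
    simp [hA]

end Walk

section UniformStep

variable {m : ℕ} {Ω : Type*} [MeasurableSpace Ω] {μ : Measure Ω} {X : Ω → Fin (m - 1) → ℤ}

lemma sum_measure_eq_step_eq_one (hm : m ≠ 0) (hX : ∀ k, μ {ω | X ω = step m k} = 1 / m) :
    ∑ k, μ {ω | X ω = step m k} = 1 := by
  simp only [hX, Finset.sum_const, Finset.card_univ, Fintype.card_fin, nsmul_eq_mul, one_div]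
  exact ENNReal.mul_inv_cancel (by exact_mod_cast hm) (by simp)

lemma integral_comp_of_uniform_step [IsProbabilityMeasure μ] (hm : m ≠ 0) (hXmeas : Measurable X)
    (hX : ∀ k, μ {ω | X ω = step m k} = 1 / m) (f : (Fin (m - 1) → ℤ) → ℝ) :
    ∫ ω, f (X ω) ∂μ = (∑ k, f (step m k)) / m := by
  rw [integral_comp_of_sum_measure_eq_one hXmeas (step_injective m)
    (sum_measure_eq_step_eq_one hm hX), Finset.sum_div]
  refine Finset.sum_congr rfl fun k _ => ?_
  rw [measureReal_def, hX, smul_eq_mul, ENNReal.toReal_div]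
  simp [div_eq_inv_mul]

lemma memLp_walk_apply_of_uniform_step {ξ A : ℕ → Ω → Fin (m - 1) → ℤ} {a : Fin (m - 1) → ℤ}
    [IsProbabilityMeasure μ] (hm : m ≠ 0) (hmeas : ∀ n, Measurable (ξ n))
    (hunif : ∀ n k, μ {ω | ξ n ω = step m k} = 1 / m) (hA0 : ∀ ω, A 0 ω = a)
    (hA : ∀ n ω, A (n + 1) ω = A n ω + ξ n ω) (p : ℝ≥0∞) (t : ℕ) (j : Fin (m - 1)) :
    MemLp (fun ω => (A t ω j : ℝ)) p μ :=
  memLp_walk_apply hA0 hA (fun t l => memLp_comp_of_sum_measure_eq_one (hmeas t)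
    (step_injective m) (sum_measure_eq_step_eq_one hm (hunif t)) (fun v => (v l : ℝ)) p) t j

end UniformStep

lemma condExp_adjacent_product_succ {m : ℕ} (hm : m ≠ 0) {Ω : Type*} [MeasurableSpace Ω]
    {μ : Measure Ω} [IsProbabilityMeasure μ] {a : Fin (m - 1) → ℤ}
    {ξ A : ℕ → Ω → Fin (m - 1) → ℤ} {ℱ : ℕ → MeasurableSpace Ω}
    (hmeas : ∀ n, Measurable (ξ n)) (hindep : iIndepFun ξ μ)
    (hunif : ∀ n k, μ {ω | ξ n ω = step m k} = 1 / m) (hA0 : ∀ ω, A 0 ω = a)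
    (hA : ∀ n ω, A (n + 1) ω = A n ω + ξ n ω)
    (hℱ : ∀ n, ℱ n = ⨆ k ∈ Finset.range n, MeasurableSpace.comap (ξ k) inferInstance)
    (n : ℕ) {i j : Fin (m - 1)} (hij : (j : ℕ) = i + 1) :
    μ[fun ω => ((A (n + 1) ω i * A (n + 1) ω j : ℤ) : ℝ) + ((n + 1 : ℕ) : ℝ) / m|ℱ n]
      =ᵐ[μ] fun ω => ((A n ω i * A n ω j : ℤ) : ℝ) + (n : ℝ) / m := by
  set B : Fin (m - 1) → Ω → ℝ := fun l ω => (A n ω l : ℝ)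
  set X : Fin (m - 1) → Ω → ℝ := fun l ω => (ξ n ω l : ℝ)
  have hsum := sum_measure_eq_step_eq_one hm (hunif n)
  have hX₂ : ∀ l, MemLp (X l) 2 μ := fun l =>
    memLp_comp_of_sum_measure_eq_one (hmeas n) (step_injective m) hsum (fun v => (v l : ℝ)) 2
  have hB₂ : ∀ l, MemLp (B l) 2 μ := memLp_walk_apply_of_uniform_step hm hmeas hunif hA0 hA 2 n
  have hBmeas : ∀ l, StronglyMeasurable[ℱ n] (B l) := fun l =>
    ((measurable_of_countable fun v : Fin (m - 1) → ℤ => (v l : ℝ)).comp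
      (measurable_walk_of_le hA0 hA hℱ le_rfl)).stronglyMeasurable
  have hXmeas : ∀ l, StronglyMeasurable[MeasurableSpace.comap (ξ n) inferInstance] (X l) :=
    fun l => ((measurable_of_countable fun v : Fin (m - 1) → ℤ => (v l : ℝ)).comp
      (comap_measurable (ξ n))).stronglyMeasurable
  have hmean : ∀ l, μ[X l] = 0 := fun l => by
    rw [integral_comp_of_uniform_step hm (hmeas n) (hunif n) fun v => (v l : ℝ),
      ← Int.cast_sum, sum_step_apply, Int.cast_zero, zero_div]
  have hcov : μ[X i * X j] = (-1 : ℝ) / m := by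
    rw [show X i * X j = fun ω => (ξ n ω i : ℝ) * (ξ n ω j : ℝ) from rfl,
      integral_comp_of_uniform_step hm (hmeas n) (hunif n) fun v => (v i : ℝ) * (v j : ℝ)]
    simp_rw [← Int.cast_mul]
    rw [← Int.cast_sum, sum_step_apply_mul_step_apply_of_succ m hij, Int.cast_neg, Int.cast_one]
  have hsplit : (fun ω => ((A (n + 1) ω i * A (n + 1) ω j : ℤ) : ℝ) + ((n + 1 : ℕ) : ℝ) / m)
      = (B i + X i) * (B j + X j) + fun _ => ((n + 1 : ℕ) : ℝ) / m := by
    ext ω; simp [B, X, hA]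
  rw [hsplit]
  filter_upwards [condExp_add (((hB₂ i).add (hX₂ i)).integrable_mul ((hB₂ j).add (hX₂ j)))
      (integrable_const (((n + 1 : ℕ) : ℝ) / m)) (ℱ n),
    condExp_add_mul_add_of_indep (filtration_le hmeas hℱ n) (hmeas n).comap_le
      (indep_filtration_increment hmeas hindep hℱ n) (hBmeas i) (hBmeas j) (hXmeas i) (hXmeas j)
      (hB₂ i) (hB₂ j) (hX₂ i) (hX₂ j)] with ω h₁ h₂
  rw [h₁, Pi.add_apply, h₂, condExp_const (filtration_le hmeas hℱ n), hmean, hmean, hcov]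
  simp only [B]
  push_cast
  ring

def adjacentPairs (d : ℕ) : Finset (Fin d × Fin d) :=
  {p | (p.2 : ℕ) = p.1 + 1}

lemma adjacentPairs_nonempty {d : ℕ} (hd : 2 ≤ d) : (adjacentPairs d).Nonempty :=
  ⟨(⟨0, by omega⟩, ⟨1, by omega⟩), by simp [adjacentPairs]⟩

lemma sInf_adjacent_eq_inf' {d : ℕ} (hd : 2 ≤ d) (F : Fin d → Fin d → ℝ) :
    sInf {x | ∃ i j : Fin d, (j : ℕ) = i + 1 ∧ x = F i j}
      = (adjacentPairs d).inf' (adjacentPairs_nonempty hd) fun p => F p.1 p.2 := by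
  rw [Finset.inf'_eq_csInf_image]
  congr 1
  ext x
  simp [adjacentPairs, eq_comm]

theorem stmt_12_general (m : ℕ) (hm : 3 ≤ m)
{Ω : Type*} [MeasurableSpace Ω] (μ : Measure Ω) [IsProbabilityMeasure μ]
    (a : Fin (m - 1) → ℕ)
    (ξ : ℕ → Ω → (Fin (m - 1) → ℤ))
    (hmeas : ∀ n, Measurable (ξ n))
    (hindep : iIndepFun ξ μ)
    (hunif : ∀ n (k : Fin m), μ {ω | ξ n ω = step m k} = 1 / m)
    (A : ℕ → Ω → (Fin (m - 1) → ℤ))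
    (hA0 : ∀ ω j, A 0 ω j = (a j : ℤ))
    (hA : ∀ n ω, A (n + 1) ω = A n ω + ξ n ω)
(ℱ : ℕ → MeasurableSpace Ω)
    (hℱ : ∀ n, ℱ n = ⨆ k ∈ Finset.range n, MeasurableSpace.comap (ξ k) inferInstance)
    (M : ℕ → Ω → ℝ)
    (hM : ∀ n ω, M n ω = sInf {x : ℝ | ∃ i j : Fin (m - 1), (j : ℕ) = (i : ℕ) + 1 ∧
      x = ((A n ω i * A n ω j : ℤ) : ℝ) + (n : ℝ) / m}) :
    ∀ n : ℕ, μ[M (n + 1)|ℱ n] ≤ᵐ[μ] M n := by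
  intro n
  have hm0 : m ≠ 0 := by omega
  have hd : 2 ≤ m - 1 := by omega
  have hpairs := adjacentPairs_nonempty hd
  have hA0' : ∀ ω, A 0 ω = fun j => (a j : ℤ) := fun ω => funext (hA0 ω)
  have hMinf : ∀ t, M t = (adjacentPairs (m - 1)).inf' hpairs
      fun p ω => ((A t ω p.1 * A t ω p.2 : ℤ) : ℝ) + (t : ℝ) / m := fun t =>
    funext fun ω => by rw [hM, sInf_adjacent_eq_inf' hd, Finset.inf'_apply]
  have hL₂ := memLp_walk_apply_of_uniform_step hm0 hmeas hunif hA0' hA 2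
  have hint : ∀ p ∈ adjacentPairs (m - 1), Integrable
      (fun ω => ((A (n + 1) ω p.1 * A (n + 1) ω p.2 : ℤ) : ℝ) + ((n + 1 : ℕ) : ℝ) / m) μ :=
    fun p _ => (((hL₂ (n + 1) p.1).integrable_mul (hL₂ (n + 1) p.2)).add
      (integrable_const (((n + 1 : ℕ) : ℝ) / m))).congr
      (ae_of_all _ fun ω => by simp)
  have hmart := fun p (hp : p ∈ adjacentPairs (m - 1)) => condExp_adjacent_product_succ hm0 hmeas
    hindep hunif hA0' hA hℱ n (i := p.1) (j := p.2) (by simpa [adjacentPairs] using hp)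
  rw [hMinf, hMinf]
  filter_upwards [condExp_finset_inf'_le hpairs hint, (eventually_all_finset _).mpr hmart]
    with ω hle hmart_ω
  rw [Finset.inf'_apply] at hle ⊢
  exact hle.trans_eq (Finset.inf'_congr hpairs rfl hmart_ω)

/-- The minimum `M n = min {A_i n * A_{i+1} n + n / m : i adjacent}`
of the martingales of Statement 11 is a supermartingale with respect to the filtration
generated by the steps. -/
theorem stmt_12 (m : ℕ) (hm : 3 ≤ m)
{Ω : Type*} [MeasurableSpace Ω] (μ : Measure Ω) [IsProbabilityMeasure μ]
    (a : Fin (m - 1) → ℕ) (ha : ∀ k, 0 < a k)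
    (ξ : ℕ → Ω → (Fin (m - 1) → ℤ))
    (hmeas : ∀ n, Measurable (ξ n))
    (hindep : iIndepFun ξ μ)
    (hunif : ∀ n (k : Fin m), μ {ω | ξ n ω = step m k} = 1 / m)
    (A : ℕ → Ω → (Fin (m - 1) → ℤ))
    (hA0 : ∀ ω j, A 0 ω j = (a j : ℤ))
    (hA : ∀ n ω, A (n + 1) ω = A n ω + ξ n ω)
(ℱ : ℕ → MeasurableSpace Ω)
    (hℱ : ∀ n, ℱ n = ⨆ k ∈ Finset.range n, MeasurableSpace.comap (ξ k) inferInstance)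
    (M : ℕ → Ω → ℝ)
    (hM : ∀ n ω, M n ω = sInf {x : ℝ | ∃ i j : Fin (m - 1), (j : ℕ) = (i : ℕ) + 1 ∧
      x = ((A n ω i * A n ω j : ℤ) : ℝ) + (n : ℝ) / m}) :
    ∀ n : ℕ, μ[M (n + 1)|ℱ n] ≤ᵐ[μ] M n :=
  stmt_12_general m hm μ a ξ hmeas hindep hunif A hA0 hA ℱ hℱ M hM
end

section
/- For all positive integers x, y, z, the following inequality holds: 4xyz/φ(x,z) − 1 ≥ (x−1)yz/φ(x−1,z) + (x+1)(y−1)z/φ(x+1,z) + x(y+1)(z−1)/φ(x,z−1) + xy(z+1)/φ(x,z+1). -/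
/-- The function `φ` from the paper: `φ (x, y) = max (x, y)` if `x ≠ y` and
`φ (x, x) = 2x² / (2x - 1)`. -/
noncomputable def phi (x y : ℕ) : ℝ :=
  if x = y then 2 * (x : ℝ) ^ 2 / (2 * (x : ℝ) - 1) else max (x : ℝ) (y : ℝ)

lemma phi_lt {a b : ℕ} (h : a < b) : phi a b = b := by
  unfold phi
  rw [if_neg (by omega), max_eq_right]
  exact_mod_cast h.le

lemma phi_gt {a b : ℕ} (h : b < a) : phi a b = a := by
  unfold phi
  rw [if_neg (by omega), max_eq_left]
  exact_mod_cast h.le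

lemma phi_diag (a : ℕ) : phi a a = 2 * (a : ℝ) ^ 2 / (2 * (a : ℝ) - 1) := by
  unfold phi
  rw [if_pos rfl]

/-- For all positive integers `x`, `y`, `z`,
`4xyz/φ(x,z) - 1 ≥ (x-1)yz/φ(x-1,z) + (x+1)(y-1)z/φ(x+1,z)
  + x(y+1)(z-1)/φ(x,z-1) + xy(z+1)/φ(x,z+1)`. -/
theorem stmt_14 (x y z : ℕ) (hx : 0 < x) (hy : 0 < y) (hz : 0 < z) :
    4 * (x : ℝ) * y * z / phi x z - 1
      ≥ ((x : ℝ) - 1) * y * z / phi (x - 1) z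
        + ((x : ℝ) + 1) * ((y : ℝ) - 1) * z / phi (x + 1) z
        + (x : ℝ) * ((y : ℝ) + 1) * ((z : ℝ) - 1) / phi x (z - 1)
        + (x : ℝ) * y * ((z : ℝ) + 1) / phi x (z + 1) := by
  have hX : (0:ℝ) < x := by exact_mod_cast hx
  have hY : (1:ℝ) ≤ y := by exact_mod_cast hy
  have hX1 : (1:ℝ) ≤ x := by exact_mod_cast hx
  have hZ1 : (1:ℝ) ≤ z := by exact_mod_cast hz
  have hZ : (0:ℝ) < z := by exact_mod_cast hz
  rcases lt_trichotomy x z with hcmp | hcmp | hcmp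
  · rcases (by omega : z = x + 1 ∨ x + 2 ≤ z) with hcase | hcase
    · -- z = x + 1
      subst hcase
      simp only [Nat.add_sub_cancel]
      rw [phi_lt (by omega : x < x + 1), phi_lt (by omega : x - 1 < x + 1),
        phi_diag (x + 1), phi_diag x, phi_lt (by omega : x < x + 1 + 1)]
      push_cast
      have e0 : 4 * (x:ℝ) * y * ((x:ℝ) + 1) / ((x:ℝ) + 1) = 4 * (x:ℝ) * y := by
        rw [div_eq_iff (by linarith : (x:ℝ) + 1 ≠ 0)] <;> ring
      have e1 : ((x:ℝ) - 1) * y * ((x:ℝ) + 1) / ((x:ℝ) + 1) = ((x:ℝ) - 1) * y := by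
        rw [div_eq_iff (by linarith : (x:ℝ) + 1 ≠ 0)] <;> ring
      have e2 : ((x:ℝ) + 1) * ((y:ℝ) - 1) * ((x:ℝ) + 1) / (2 * ((x:ℝ) + 1) ^ 2 / (2 * ((x:ℝ) + 1) - 1))
          = ((y:ℝ) - 1) * (2 * x + 1) / 2 := by
        rw [div_div_eq_mul_div, div_eq_iff (by positivity : 2 * ((x:ℝ) + 1) ^ 2 ≠ 0)] <;> ring
      have e3 : (x:ℝ) * ((y:ℝ) + 1) * ((x:ℝ) + 1 - 1) / (2 * (x:ℝ) ^ 2 / (2 * (x:ℝ) - 1))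
          = ((y:ℝ) + 1) * (2 * x - 1) / 2 := by
        rw [div_div_eq_mul_div, div_eq_iff (by nlinarith : 2 * (x:ℝ) ^ 2 ≠ 0)] <;> ring
      have e4 : (x:ℝ) * y * ((x:ℝ) + 1 + 1) / ((x:ℝ) + 1 + 1) = (x:ℝ) * y := by
        rw [div_eq_iff (by linarith : (x:ℝ) + 1 + 1 ≠ 0)] <;> ring
      rw [e0, e1, e2, e3, e4]
      nlinarith
    · -- z ≥ x + 2
      have hZ3 : (3:ℝ) ≤ z := by exact_mod_cast (by omega : 3 ≤ z)
      rw [phi_lt (by omega : x < z), phi_lt (by omega : x - 1 < z),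
        phi_lt (by omega : x + 1 < z), phi_lt (by omega : x < z - 1),
        phi_lt (by omega : x < z + 1)]
      rw [Nat.cast_sub (by omega : 1 ≤ z)]
      push_cast
      have e0 : 4 * (x:ℝ) * y * z / z = 4 * x * y := by
        rw [div_eq_iff (by linarith : (z:ℝ) ≠ 0)] <;> ring
      have e1 : ((x:ℝ) - 1) * y * z / z = ((x:ℝ) - 1) * y := by
        rw [div_eq_iff (by linarith : (z:ℝ) ≠ 0)] <;> ring
      have e2 : ((x:ℝ) + 1) * ((y:ℝ) - 1) * z / z = ((x:ℝ) + 1) * (y - 1) := by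
        rw [div_eq_iff (by linarith : (z:ℝ) ≠ 0)] <;> ring
      have e3 : (x:ℝ) * ((y:ℝ) + 1) * ((z:ℝ) - 1) / ((z:ℝ) - 1) = (x:ℝ) * (y + 1) := by
        rw [div_eq_iff (by linarith : (z:ℝ) - 1 ≠ 0)] <;> ring
      have e4 : (x:ℝ) * y * ((z:ℝ) + 1) / ((z:ℝ) + 1) = (x:ℝ) * y := by
        rw [div_eq_iff (by linarith : (z:ℝ) + 1 ≠ 0)] <;> ring
      rw [e0, e1, e2, e3, e4]
      nlinarith
  · -- z = x
    subst hcmp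
    rw [phi_diag, phi_lt (by omega : x - 1 < x), phi_gt (by omega : x < x + 1),
      phi_gt (by omega : x - 1 < x), phi_lt (by omega : x < x + 1)]
    push_cast
    have e0 : 4 * (x:ℝ) * y * x / (2 * (x:ℝ) ^ 2 / (2 * (x:ℝ) - 1)) = 2 * y * (2 * x - 1) := by
      rw [div_div_eq_mul_div, div_eq_iff (by nlinarith : 2 * (x:ℝ) ^ 2 ≠ 0)] <;> ring
    have e1 : ((x:ℝ) - 1) * y * x / x = ((x:ℝ) - 1) * y := by
      rw [div_eq_iff (by linarith : (x:ℝ) ≠ 0)] <;> ring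
    have e2 : ((x:ℝ) + 1) * ((y:ℝ) - 1) * x / ((x:ℝ) + 1) = ((y:ℝ) - 1) * x := by
      rw [div_eq_iff (by linarith : (x:ℝ) + 1 ≠ 0)] <;> ring
    have e3 : (x:ℝ) * ((y:ℝ) + 1) * ((x:ℝ) - 1) / x = ((y:ℝ) + 1) * (x - 1) := by
      rw [div_eq_iff (by linarith : (x:ℝ) ≠ 0)] <;> ring
    have e4 : (x:ℝ) * y * ((x:ℝ) + 1) / ((x:ℝ) + 1) = (x:ℝ) * y := by
      rw [div_eq_iff (by linarith : (x:ℝ) + 1 ≠ 0)] <;> ring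
    rw [e0, e1, e2, e3, e4]
    nlinarith
  · rcases (by omega : x = z + 1 ∨ z + 2 ≤ x) with hcase | hcase
    · -- x = z + 1
      subst hcase
      simp only [Nat.add_sub_cancel]
      rw [phi_gt (by omega : z < z + 1), phi_diag z, phi_gt (by omega : z < z + 1 + 1),
        phi_gt (by omega : z - 1 < z + 1), phi_diag (z + 1)]
      push_cast
      have e0 : 4 * ((z:ℝ) + 1) * y * z / ((z:ℝ) + 1) = 4 * (y:ℝ) * z := by
        rw [div_eq_iff (by linarith : (z:ℝ) + 1 ≠ 0)] <;> ring
      have e1 : ((z:ℝ) + 1 - 1) * y * z / (2 * (z:ℝ) ^ 2 / (2 * (z:ℝ) - 1))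
          = (y:ℝ) * (2 * z - 1) / 2 := by
        rw [div_div_eq_mul_div, div_eq_iff (by nlinarith : 2 * (z:ℝ) ^ 2 ≠ 0)] <;> ring
      have e2 : ((z:ℝ) + 1 + 1) * ((y:ℝ) - 1) * z / ((z:ℝ) + 1 + 1) = ((y:ℝ) - 1) * z := by
        rw [div_eq_iff (by linarith : (z:ℝ) + 1 + 1 ≠ 0)] <;> ring
      have e3 : ((z:ℝ) + 1) * ((y:ℝ) + 1) * ((z:ℝ) - 1) / ((z:ℝ) + 1) = ((y:ℝ) + 1) * (z - 1) := by
        rw [div_eq_iff (by linarith : (z:ℝ) + 1 ≠ 0)] <;> ring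
      have e4 : ((z:ℝ) + 1) * y * ((z:ℝ) + 1) / (2 * ((z:ℝ) + 1) ^ 2 / (2 * ((z:ℝ) + 1) - 1))
          = (y:ℝ) * (2 * z + 1) / 2 := by
        rw [div_div_eq_mul_div, div_eq_iff (by positivity : 2 * ((z:ℝ) + 1) ^ 2 ≠ 0)] <;> ring
      rw [e0, e1, e2, e3, e4]
      nlinarith
    · -- x ≥ z + 2
      rw [phi_gt (by omega : z < x), phi_gt (by omega : z < x - 1),
        phi_gt (by omega : z < x + 1), phi_gt (by omega : z - 1 < x),
        phi_gt (by omega : z + 1 < x)]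
      rw [Nat.cast_sub (by omega : 1 ≤ x)]
      push_cast
      have hX3 : (3:ℝ) ≤ x := by exact_mod_cast (by omega : 3 ≤ x)
      have e0 : 4 * (x:ℝ) * y * z / x = 4 * y * z := by
        rw [div_eq_iff (by linarith : (x:ℝ) ≠ 0)] <;> ring
      have e1 : ((x:ℝ) - 1) * y * z / ((x:ℝ) - 1) = (y:ℝ) * z := by
        rw [div_eq_iff (by linarith : (x:ℝ) - 1 ≠ 0)] <;> ring
      have e2 : ((x:ℝ) + 1) * ((y:ℝ) - 1) * z / ((x:ℝ) + 1) = ((y:ℝ) - 1) * z := by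
        rw [div_eq_iff (by linarith : (x:ℝ) + 1 ≠ 0)] <;> ring
      have e3 : (x:ℝ) * ((y:ℝ) + 1) * ((z:ℝ) - 1) / x = ((y:ℝ) + 1) * (z - 1) := by
        rw [div_eq_iff (by linarith : (x:ℝ) ≠ 0)] <;> ring
      have e4 : (x:ℝ) * y * ((z:ℝ) + 1) / x = (y:ℝ) * (z + 1) := by
        rw [div_eq_iff (by linarith : (x:ℝ) ≠ 0)] <;> ring
      rw [e0, e1, e2, e3, e4]
      nlinarith
end

section
/- For each fixed i ∈ {1,2,…,m−2}, define H_{i,i+1}(n) = A_i(n)²·A_{i+1}(n)² + (2/3)·A_i(n)·A_{i+1}(n)·(A_i(n)² + A_{i+1}(n)²). Then for every n ≥ 0, E[H_{i,i+1}(n+1) | F_n] = H_{i,i+1}(n) + (4/m)·A_i(n)·A_{i+1}(n) − 1/(3m). -/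
/-!
Given `ℱ n`, the step `ξ n` is independent of the past and uniform on the `m` step vectors,
while `A n` is `ℱ n`-measurable, so `E[H (n+1) | ℱ n]` is the average over the `m` steps of
the potential `φ(x, y) = x²y² + (2/3)xy(x² + y²)` at `A n + step`. Only the steps `i`, `i + 1`,
`i + 2` move the pair `(A_i, A_{i+1})`, by `(-1, 0)`, `(1, -1)`, `(0, 1)`, and
`φ(x-1, y) + φ(x+1, y-1) + φ(x, y+1) - 3 φ(x, y) = 4xy - 1/3`.
-/

open MeasureTheory ProbabilityTheory Filter
open scoped ENNReal

section Probability

variable {Ω β ι : Type*} {m mΩ : MeasurableSpace Ω} {μ : Measure Ω}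

lemma ae_exists_eq_of_sum_measure_eq_one [IsProbabilityMeasure μ] [Fintype ι]
    [MeasurableSpace β] [MeasurableSingletonClass β] {ξ : Ω → β} (hξ : Measurable ξ)
    {s : ι → β} (hs : Function.Injective s) (h : ∑ k, μ {ω | ξ ω = s k} = 1) :
    ∀ᵐ ω ∂μ, ∃ k, ξ ω = s k := by
  have hmeas : ∀ k, MeasurableSet {ω | ξ ω = s k} := fun k => hξ (measurableSet_singleton (s k))
  have hunion : {ω | ∃ k, ξ ω = s k} = ⋃ k, {ω | ξ ω = s k} := by ext; simp
  have hdisj : Pairwise (Function.onFun Disjoint fun k => {ω | ξ ω = s k}) := fun k l hkl =>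
    Set.disjoint_left.2 fun ω hk hl => hkl (hs (hk.symm.trans hl))
  rw [ae_iff_measure_eq (hunion ▸ (MeasurableSet.iUnion hmeas).nullMeasurableSet), hunion,
    measure_iUnion hdisj hmeas, tsum_fintype, h, measure_univ]

lemma integrable_comp_of_ae_mem_finite [IsFiniteMeasure μ] [MeasurableSpace β]
    [DiscreteMeasurableSpace β] {X : Ω → β} (hX : Measurable X) {T : Set β} (hT : T.Finite)
    (hXT : ∀ᵐ ω ∂μ, X ω ∈ T) (g : β → ℝ) : Integrable (fun ω => g (X ω)) μ := by
  obtain ⟨C, hC⟩ := (hT.image fun x => ‖g x‖).bddAbove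
  exact Integrable.of_bound (Measurable.of_discrete.comp hX).aestronglyMeasurable C
    (hXT.mono fun ω hω => hC ⟨X ω, hω, rfl⟩)

theorem condExp_ae_eq_sum_of_indep [IsFiniteMeasure μ] [Fintype ι] [MeasurableSpace β]
    [MeasurableSingletonClass β] (hm : m ≤ mΩ) {ξ : Ω → β}
    (hξ : Measurable ξ) (hindep : Indep (MeasurableSpace.comap ξ inferInstance) m μ)
    {s : ι → β} (hs : Function.Injective s) (hξs : ∀ᵐ ω ∂μ, ∃ k, ξ ω = s k)
    {F : ι → Ω → ℝ} (hF : ∀ k, StronglyMeasurable[m] (F k)) (hFint : ∀ k, Integrable (F k) μ)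
    {Y : Ω → ℝ} (hY : ∀ᵐ ω ∂μ, ∀ k, ξ ω = s k → Y ω = F k ω) :
    μ[Y|m] =ᵐ[μ] ∑ k, μ.real {ω | ξ ω = s k} • F k := by
  set I : ι → Ω → ℝ := fun k => {ω | ξ ω = s k}.indicator 1
  have hImeas : ∀ k, MeasurableSet {ω | ξ ω = s k} := fun k => hξ (measurableSet_singleton (s k))
  have hIint : ∀ k, Integrable (I k) μ := fun k => (integrable_const 1).indicator (hImeas k)
  have hFIint : ∀ k, Integrable (F k * I k) μ := fun k => by
    have hFI : F k * I k = {ω | ξ ω = s k}.indicator (F k) := by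
      ext ω
      by_cases h : ξ ω = s k <;> simp [I, h]
    exact hFI ▸ (hFint k).indicator (hImeas k)
  have hI : ∀ k, μ[I k|m] =ᵐ[μ] fun _ => μ.real {ω | ξ ω = s k} := fun k =>
    (condExp_indep_eq hξ.comap_le hm
      (stronglyMeasurable_one.indicator ⟨{s k}, measurableSet_singleton _, rfl⟩) hindep).trans
      (.of_forall fun _ => integral_indicator_one (hImeas k))
  have hYsum : Y =ᵐ[μ] ∑ k, F k * I k := by
    filter_upwards [hξs, hY] with ω ⟨l, hl⟩ hYω
    rw [Finset.sum_apply, Finset.sum_eq_single l]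
    · simp [I, hl, hYω l hl]
    · intro k _ hkl
      simp [I, hl, hs.ne hkl.symm]
    · simp
  calc μ[Y|m] =ᵐ[μ] μ[∑ k, F k * I k|m] := condExp_congr_ae hYsum
    _ =ᵐ[μ] ∑ k, μ[F k * I k|m] := condExp_finsetSum (fun k _ => hFIint k) m
    _ =ᵐ[μ] ∑ k, μ.real {ω | ξ ω = s k} • F k := by
      have h := ae_all_iff.2 fun k =>
        (condExp_mul_of_stronglyMeasurable_left (hF k) (hFIint k) (hIint k)).trans
          ((EventuallyEq.refl _ (F k)).mul (hI k))
      filter_upwards [h] with ω hω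
      simp [Finset.sum_apply, hω, mul_comm]

end Probability

section RandomWalk

variable {Ω E : Type*} {mΩ : MeasurableSpace Ω} {μ : Measure Ω}

lemma ProbabilityTheory.iIndepFun.indep_comap_iSup_range {β : Type*} [MeasurableSpace β]
    {ξ : ℕ → Ω → β} (hξ : ∀ n, Measurable (ξ n)) (h : iIndepFun ξ μ) (n : ℕ) :
    Indep (MeasurableSpace.comap (ξ n) inferInstance)
      (⨆ k ∈ Finset.range n, MeasurableSpace.comap (ξ k) inferInstance) μ := by
  simpa using indep_iSup_of_disjoint (fun k => (hξ k).comap_le) h.iIndep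
    (S := {n}) (T := ↑(Finset.range n)) (by simp)

lemma measurable_iSup_range_of_succ_eq_add [MeasurableSpace E] [Add E] [MeasurableAdd₂ E]
    {ξ A : ℕ → Ω → E} {c : E} (hA0 : ∀ ω, A 0 ω = c) (hA : ∀ n ω, A (n + 1) ω = A n ω + ξ n ω)
    (n : ℕ) :
    Measurable[⨆ k ∈ Finset.range n, MeasurableSpace.comap (ξ k) inferInstance] (A n) := by
  induction n with
  | zero => simp [funext hA0]
  | succ n ih =>
    rw [funext (hA n)]
    refine Measurable.add (ih.mono (biSup_mono fun k hk => ?_) le_rfl) (Measurable.of_comap_le ?_)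
    · simp only [Finset.mem_range] at hk ⊢; omega
    · exact le_iSup₂ (f := fun k (_ : k ∈ Finset.range (n + 1)) =>
        MeasurableSpace.comap (ξ k) inferInstance) n (by simp)

lemma ae_mem_closedBall_of_succ_eq_add [SeminormedAddCommGroup E] {ξ A : ℕ → Ω → E} {c : E}
    (hA0 : ∀ ω, A 0 ω = c) (hA : ∀ n ω, A (n + 1) ω = A n ω + ξ n ω)
    (hξ : ∀ n, ∀ᵐ ω ∂μ, ‖ξ n ω‖ ≤ 1) (n : ℕ) : ∀ᵐ ω ∂μ, A n ω ∈ Metric.closedBall c n := by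
  induction n with
  | zero => simp [hA0]
  | succ n ih =>
    filter_upwards [ih, hξ n] with ω hA_n hξ_n
    rw [Metric.mem_closedBall, hA n ω, Nat.cast_succ]
    calc dist (A n ω + ξ n ω) c ≤ dist (A n ω + ξ n ω) (A n ω) + dist (A n ω) c :=
          dist_triangle _ _ _
      _ ≤ 1 + n := by rw [dist_self_add_left]; linarith [Metric.mem_closedBall.1 hA_n]
      _ = n + 1 := add_comm _ _

end RandomWalk

lemma norm_step_le (m : ℕ) (k : Fin m) : ‖step m k‖ ≤ 1 :=
  (pi_norm_le_iff_of_nonneg zero_le_one).2 fun j => by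
    simp only [step, Int.norm_eq_abs]
    split_ifs <;> simp_all

lemma sum_step_adjacent {m : ℕ} {i j : Fin (m - 1)} (hij : (j : ℕ) = i + 1) (g : ℤ → ℤ → ℝ) :
    ∑ k : Fin m, g (step m k i) (step m k j)
      = g (-1) 0 + g 1 (-1) + g 0 1 + (m - 3) * g 0 0 := by
  have hi : (i : ℕ) + 2 < m := by omega
  let k₀ : Fin m := ⟨i, by omega⟩
  let k₁ : Fin m := ⟨i + 1, by omega⟩
  let k₂ : Fin m := ⟨i + 2, hi⟩
  have hsupp : ∀ k ∉ ({k₀, k₁, k₂} : Finset (Fin m)), step m k i = 0 ∧ step m k j = 0 := by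
    intro k hk
    simp only [Finset.mem_insert, Finset.mem_singleton, Fin.ext_iff, k₀, k₁, k₂] at hk
    simp only [step]
    omega
  have hdist : k₀ ∉ ({k₁, k₂} : Finset (Fin m)) ∧ k₁ ∉ ({k₂} : Finset (Fin m)) := by
    simp [Fin.ext_iff, k₀, k₁, k₂]
  calc ∑ k : Fin m, g (step m k i) (step m k j)
      = ∑ k, (g (step m k i) (step m k j) - g 0 0) + m * g 0 0 := by simp
    _ = ∑ k ∈ {k₀, k₁, k₂}, (g (step m k i) (step m k j) - g 0 0) + m * g 0 0 := by
      congr 1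
      exact (Finset.sum_subset (Finset.subset_univ _) fun k _ hk => by simp [hsupp k hk]).symm
    _ = g (-1) 0 + g 1 (-1) + g 0 1 + (m - 3) * g 0 0 := by
      rw [Finset.sum_insert hdist.1, Finset.sum_insert hdist.2, Finset.sum_singleton]
      have : (i : ℕ) + 1 + 1 ≠ i := by omega
      simp [step, k₀, k₁, k₂, hij, this]
      ring

noncomputable def pairPotential (x y : ℝ) : ℝ :=
  x ^ 2 * y ^ 2 + 2 / 3 * (x * y) * (x ^ 2 + y ^ 2)

lemma pairPotential_sum_increments (x y : ℝ) :
    pairPotential (x - 1) y + pairPotential (x + 1) (y - 1) + pairPotential x (y + 1)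
      = 3 * pairPotential x y + 4 * (x * y) - 1 / 3 := by
  unfold pairPotential
  ring

lemma mean_pairPotential_step {m : ℕ} {i j : Fin (m - 1)} (hij : (j : ℕ) = i + 1) (x y : ℝ) :
    ∑ k : Fin m, 1 / (m : ℝ) * pairPotential (x + step m k i) (y + step m k j)
      = pairPotential x y + 4 / m * (x * y) - 1 / (3 * m) := by
  have hm : (m : ℝ) ≠ 0 := Nat.cast_ne_zero.2 (by have := j.isLt; omega)
  rw [← Finset.mul_sum, sum_step_adjacent hij fun s t => pairPotential (x + s) (y + t)]
  push_cast
  simp only [add_zero, ← sub_eq_add_neg]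
  field_simp
  linear_combination (3 : ℝ) * pairPotential_sum_increments x y

theorem stmt_16_general (m : ℕ)
{Ω : Type*} [MeasurableSpace Ω] (μ : Measure Ω) [IsProbabilityMeasure μ]
    (a : Fin (m - 1) → ℕ)
    (ξ : ℕ → Ω → (Fin (m - 1) → ℤ))
    (hmeas : ∀ n, Measurable (ξ n))
    (hindep : iIndepFun ξ μ)
    (hunif : ∀ n (k : Fin m), μ {ω | ξ n ω = step m k} = 1 / m)
    (A : ℕ → Ω → (Fin (m - 1) → ℤ))
    (hA0 : ∀ ω j, A 0 ω j = (a j : ℤ))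
    (hA : ∀ n ω, A (n + 1) ω = A n ω + ξ n ω)
(ℱ : ℕ → MeasurableSpace Ω)
    (hℱ : ∀ n, ℱ n = ⨆ k ∈ Finset.range n, MeasurableSpace.comap (ξ k) inferInstance)
    (i j : Fin (m - 1)) (hij : (j : ℕ) = (i : ℕ) + 1)
    (H : ℕ → Ω → ℝ)
    (hH : ∀ n ω, H n ω = (A n ω i : ℝ) ^ 2 * (A n ω j : ℝ) ^ 2
      + (2 / 3) * ((A n ω i : ℝ) * (A n ω j : ℝ)) * ((A n ω i : ℝ) ^ 2 + (A n ω j : ℝ) ^ 2)) :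
    ∀ n : ℕ, μ[H (n + 1)|ℱ n]
      =ᵐ[μ] fun ω => H n ω + (4 / (m : ℝ)) * ((A n ω i : ℝ) * (A n ω j : ℝ)) - 1 / (3 * m) := by
  intro n
  have hm0 : m ≠ 0 := by have := j.isLt; omega
  have hstep : ∀ k, ∀ᵐ ω ∂μ, ∃ l, ξ k ω = step m l := fun k =>
    ae_exists_eq_of_sum_measure_eq_one (hmeas k) (step_injective m) (by
      simp [hunif k, ENNReal.mul_inv_cancel, hm0])
  have hA_zero : ∀ ω, A 0 ω = fun j => (a j : ℤ) := fun ω => funext (hA0 ω)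
  have hAmeas : Measurable[ℱ n] (A n) := hℱ n ▸ measurable_iSup_range_of_succ_eq_add hA_zero hA n
  have hle : ℱ n ≤ ‹_› := hℱ n ▸ iSup₂_le fun k _ => (hmeas k).comap_le
  have hAbdd := ae_mem_closedBall_of_succ_eq_add hA_zero hA (fun k =>
    (hstep k).mono fun ω ⟨l, hl⟩ => hl ▸ norm_step_le m l) n
  let g : Fin m → (Fin (m - 1) → ℤ) → ℝ := fun k v =>
    pairPotential (v i + step m k i) (v j + step m k j)
  have hcond := condExp_ae_eq_sum_of_indep hle (hmeas n)
    (hℱ n ▸ hindep.indep_comap_iSup_range hmeas n) (step_injective m) (hstep n)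
    (F := fun k ω => g k (A n ω))
    (fun k => ((Measurable.of_discrete (f := g k)).comp hAmeas).stronglyMeasurable)
    (fun k => integrable_comp_of_ae_mem_finite (hAmeas.mono hle le_rfl)
      (isCompact_closedBall _ _).finite_of_discrete hAbdd (g k))
    (Y := H (n + 1)) (.of_forall fun ω k hk => by
      simp [g, hH, hA, hk, pairPotential])
  filter_upwards [hcond] with ω hω
  rw [hω, show H n ω = pairPotential (A n ω i) (A n ω j) from hH n ω]
  simpa [measureReal_def, hunif, g] using mean_pairPotential_step hij (A n ω i) (A n ω j)

/-- For each adjacent pair `i, j = i + 1`, the process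
`H n = A_i n ^ 2 * A_j n ^ 2 + (2/3) * A_i n * A_j n * (A_i n ^ 2 + A_j n ^ 2)` satisfies
`E[H (n+1) | ℱ n] = H n + (4/m) * A_i n * A_j n - 1 / (3m)`. -/
theorem stmt_16 (m : ℕ) (hm : 3 ≤ m)
{Ω : Type*} [MeasurableSpace Ω] (μ : Measure Ω) [IsProbabilityMeasure μ]
    (a : Fin (m - 1) → ℕ) (ha : ∀ k, 0 < a k)
    (ξ : ℕ → Ω → (Fin (m - 1) → ℤ))
    (hmeas : ∀ n, Measurable (ξ n))
    (hindep : iIndepFun ξ μ)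
    (hunif : ∀ n (k : Fin m), μ {ω | ξ n ω = step m k} = 1 / m)
    (A : ℕ → Ω → (Fin (m - 1) → ℤ))
    (hA0 : ∀ ω j, A 0 ω j = (a j : ℤ))
    (hA : ∀ n ω, A (n + 1) ω = A n ω + ξ n ω)
(ℱ : ℕ → MeasurableSpace Ω)
    (hℱ : ∀ n, ℱ n = ⨆ k ∈ Finset.range n, MeasurableSpace.comap (ξ k) inferInstance)
    (i j : Fin (m - 1)) (hij : (j : ℕ) = (i : ℕ) + 1)
    (H : ℕ → Ω → ℝ)
    (hH : ∀ n ω, H n ω = (A n ω i : ℝ) ^ 2 * (A n ω j : ℝ) ^ 2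
      + (2 / 3) * ((A n ω i : ℝ) * (A n ω j : ℝ)) * ((A n ω i : ℝ) ^ 2 + (A n ω j : ℝ) ^ 2)) :
    ∀ n : ℕ, μ[H (n + 1)|ℱ n]
      =ᵐ[μ] fun ω => H n ω + (4 / (m : ℝ)) * ((A n ω i : ℝ) * (A n ω j : ℝ)) - 1 / (3 * m) :=
  stmt_16_general m μ a ξ hmeas hindep hunif A hA0 hA ℱ hℱ i j hij H hH
end
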